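/- Let R be a commutative ring and M an R-module. Then M is universally torsionless (the natural map M ⊗_R N → Hom_R(M*,N) is injective for all R-modules N) if and only if there exist an index set I and an R-linear map ι: M → ∏_{i∈I} R such that for every commutative R-algebra S the induced map M ⊗_R S → ∏_{i∈I} S is injective. -/

import Mathlib

/-!
Universal torsionlessness amounts to a local splitting property: for every finite `F ⊆ M` there
are `w₁, …, wₖ ∈ M*` and `u₁, …, uₖ ∈ M` with `m = ∑ wᵢ(m) uᵢ` for all `m ∈ F`. To get it, let
`D ⊆ R^F` be the image of `w ↦ (w m)ₘ : M* → R^F`; the natural map kills `∑_{m ∈ F} m ⊗ eₘ` in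
`M ⊗ R^F / (D + ann(M)^F)`, and right exactness of `M ⊗ -` then expresses `(m)ₘ` through `D`.
Letting `ι` collect the `wᵢ` of all these systems, an element `x = ∑ mⱼ ⊗ sⱼ` of `M ⊗ S`
rewrites as `∑ᵢ uᵢ ⊗ ιᵢ(x)`, so `M ⊗ S → ∏ S` is injective.
Conversely, `N` is an `R`-linear retract of the idealization `S = (R ⧸ ann N) ⋉ N`, and
`M ⊗ N → M ⊗ S → ∏ S` factors through `M ⊗ N → Hom(M*, N)`.
The annihilators only serve to keep these auxiliary modules in the universe of `M`, resp. `N`.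
-/

open TensorProduct

/-- The natural map `M ⊗ N → Hom(M*, N)`, `m ⊗ n ↦ (w ↦ w m • n)`. -/
noncomputable def natMap (R : Type*) [CommRing R] (M : Type*) [AddCommGroup M] [Module R M]
    (N : Type*) [AddCommGroup N] [Module R N] :
    M ⊗[R] N →ₗ[R] ((M →ₗ[R] R) →ₗ[R] N) :=
  (dualTensorHom R (Module.Dual R M) N).comp (LinearMap.rTensor N (Module.Dual.eval R M))

/-- Given `ι : M → ∏ I, R`, the induced map `M ⊗ S → ∏ I, S`, `m ⊗ s ↦ (i ↦ ι m i • s)`. -/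
noncomputable def prodMap (R : Type*) [CommRing R] (M : Type*) [AddCommGroup M] [Module R M]
    (I : Type*) (iota : M →ₗ[R] (I → R)) (S : Type*) [CommRing S] [Algebra R S] :
    M ⊗[R] S →ₗ[R] (I → S) :=
  TensorProduct.lift <| LinearMap.mk₂ R (fun m s i => iota m i • s)
    (fun m m' s => by funext i; simp [add_smul])
    (fun r m s => by funext i; simp [mul_smul])
    (fun m s s' => by funext i; simp [smul_add])
    (fun r m s => by funext i; exact smul_comm _ _ _)

universe u v w

def UniversallyTorsionless (R : Type u) [CommRing R] (M : Type v) [AddCommGroup M] [Module R M] :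
    Prop :=
  ∀ (N : Type v) [AddCommGroup N] [Module R N], Function.Injective (natMap R M N)

variable {R : Type u} [CommRing R] {M : Type v} [AddCommGroup M] [Module R M]

@[simp]
lemma natMap_tmul {N : Type*} [AddCommGroup N] [Module R N] (m : M) (n : N) (w : Module.Dual R M) :
    natMap R M N (m ⊗ₜ n) w = w m • n := by
  simp [natMap]

@[simp]
lemma prodMap_tmul {I : Type*} (ι : M →ₗ[R] I → R) {S : Type*} [CommRing S] [Algebra R S]
    (m : M) (s : S) : prodMap R M I ι S (m ⊗ₜ s) = fun i => ι m i • s :=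
  rfl

lemma natMap_lTensor {N N' : Type*} [AddCommGroup N] [Module R N] [AddCommGroup N'] [Module R N']
    (f : N →ₗ[R] N') (x : M ⊗[R] N) (w : Module.Dual R M) :
    natMap R M N' (f.lTensor M x) w = f (natMap R M N x w) := by
  induction x using TensorProduct.induction_on with
  | zero => simp
  | tmul m n => simp
  | add x y hx hy => simp [hx, hy]

instance Module.small_quotient_annihilator : Small.{v} (R ⧸ Module.annihilator R M) :=
  small_of_injective (RingHom.kerLift_injective (Module.toAddMonoidEnd R M))

lemma UniversallyTorsionless.natMap_injective (h : UniversallyTorsionless R M)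
    (N : Type w) [AddCommGroup N] [Module R N] [Small.{v} N] :
    Function.Injective (natMap R M N) := by
  let e := (Shrink.linearEquiv R N).symm
  intro x y hxy
  refine (e.lTensor M).injective (h (Shrink.{v} N) ?_)
  ext w : 1
  simp only [← LinearEquiv.coe_coe, LinearEquiv.coe_lTensor, natMap_lTensor, hxy]

lemma natMap_pi_apply {ι : Type*} (x : M ⊗[R] (ι → R)) (w : Module.Dual R M) (j : ι) :
    natMap R M (ι → R) x w j = w (TensorProduct.piScalarRightHom R R M ι x j) := by
  induction x using TensorProduct.induction_on with
  | zero => simp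
  | tmul m f => simp [mul_comm]
  | add x y hx hy => simp [hx, hy]

lemma UniversallyTorsionless.mem_span_dual_smul (h : UniversallyTorsionless R M) {ι : Type*}
    [Finite ι] (m : ι → M) :
    m ∈ Submodule.span R (Set.range fun p : Module.Dual R M × M => fun j => p.1 (m j) • p.2) := by
  classical
  have := Fintype.ofFinite ι
  let K := Module.annihilator R M
  let Φ : Module.Dual R M →ₗ[R] ι → R := LinearMap.pi fun j => Module.Dual.eval R M (m j)
  let D : Submodule R (ι → R) := LinearMap.range Φ ⊔ Submodule.pi Set.univ fun _ => K
  have : Small.{v} ((ι → R) ⧸ Submodule.pi Set.univ fun _ => K) :=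
    small_map (Submodule.quotientPi _).toEquiv
  have : Small.{v} ((ι → R) ⧸ D) := small_of_surjective (Submodule.factor_surjective le_sup_right)
  let e := TensorProduct.piScalarRight R R M ι
  have hker : D.mkQ.lTensor M (e.symm m) = 0 := by
    refine h.natMap_injective _ (LinearMap.ext fun w => ?_)
    rw [natMap_lTensor, map_zero, LinearMap.zero_apply, Submodule.mkQ_apply,
      Submodule.Quotient.mk_eq_zero]
    refine Submodule.mem_sup_left ⟨w, funext fun j => ?_⟩
    simp [Φ, natMap_pi_apply, ← TensorProduct.piScalarRight_apply, e]
  obtain ⟨y, hy⟩ : e.symm m ∈ LinearMap.range (D.subtype.lTensor M) := by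
    rw [← lTensor_mkQ]
    exact hker
  have hspan : ∀ z, e (D.subtype.lTensor M z) ∈
      Submodule.span R (Set.range fun p : Module.Dual R M × M => fun j => p.1 (m j) • p.2) := by
    intro z
    induction z using TensorProduct.induction_on with
    | zero => simp
    | add y z hy hz => simpa using Submodule.add_mem _ hy hz
    | tmul m' d =>
      obtain ⟨_, ⟨w, rfl⟩, k, hk, hd⟩ := Submodule.mem_sup.mp d.2
      refine Submodule.subset_span ⟨(w, m'), funext fun j => ?_⟩
      have hkj : k j • m' = 0 := Module.mem_annihilator.mp (hk j trivial) m'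
      simp [e, ← hd, add_smul, hkj, Φ]
  simpa [hy] using hspan y

lemma UniversallyTorsionless.exists_dual_sum_smul_eq (h : UniversallyTorsionless R M)
    (F : Finset M) :
    ∃ (k : ℕ) (w : Fin k → Module.Dual R M) (u : Fin k → M), ∀ m ∈ F, ∑ i, w i m • u i = m := by
  obtain ⟨k, c, g, hg⟩ := Submodule.mem_span_set'.mp (h.mem_span_dual_smul ((↑) : F → M))
  choose p hp using fun i => (g i).2
  refine ⟨k, fun i => c i • (p i).1, fun i => (p i).2, fun m hm => ?_⟩
  have := congrFun hg ⟨m, hm⟩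
  simp only [Finset.sum_apply, Pi.smul_apply, ← hp] at this
  simpa [smul_smul] using this

lemma sum_tmul_eq_sum_tmul_sum {N κ : Type*} [AddCommGroup N] [Module R N] [Fintype κ]
    (P : Finset (M × N)) (w : κ → Module.Dual R M) (u : κ → M)
    (hP : ∀ p ∈ P, ∑ i, w i p.1 • u i = p.1) :
    ∑ p ∈ P, p.1 ⊗ₜ[R] p.2 = ∑ i, u i ⊗ₜ[R] ∑ p ∈ P, w i p.1 • p.2 := by
  calc ∑ p ∈ P, p.1 ⊗ₜ[R] p.2
      = ∑ p ∈ P, ∑ i, u i ⊗ₜ[R] (w i p.1 • p.2) := by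
        refine Finset.sum_congr rfl fun p hp => ?_
        conv_lhs => rw [← hP p hp]
        simp only [TensorProduct.sum_tmul, TensorProduct.smul_tmul]
    _ = ∑ i, u i ⊗ₜ[R] ∑ p ∈ P, w i p.1 • p.2 := by
        rw [Finset.sum_comm]
        simp only [TensorProduct.tmul_sum]

theorem UniversallyTorsionless.exists_prodMap_injective (h : UniversallyTorsionless R M) :
    ∃ (I : Type v) (ι : M →ₗ[R] I → R), ∀ (S : Type*) [CommRing S] [Algebra R S],
      Function.Injective (prodMap R M I ι S) := by
  choose k w u hwu using h.exists_dual_sum_smul_eq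
  refine ⟨Σ F : Finset M, Fin (k F), LinearMap.pi fun i => w i.1 i.2, fun S _ _ => ?_⟩
  refine (injective_iff_map_eq_zero _).mpr fun x hx => ?_
  classical
  obtain ⟨P, rfl⟩ := TensorProduct.exists_finset x
  let F := P.image Prod.fst
  rw [sum_tmul_eq_sum_tmul_sum P (w F) (u F) fun p hp => hwu F p.1 (Finset.mem_image_of_mem _ hp)]
  refine Finset.sum_eq_zero fun i _ => ?_
  have := congrFun hx ⟨F, i⟩
  simp only [map_sum, prodMap_tmul, Finset.sum_apply, LinearMap.pi_apply, Pi.zero_apply] at this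
  rw [this, TensorProduct.tmul_zero]

lemma prodMap_lTensor {I : Type*} (ι : M →ₗ[R] I → R) {S : Type*} [CommRing S] [Algebra R S]
    {N : Type*} [AddCommGroup N] [Module R N] (j : N →ₗ[R] S) (x : M ⊗[R] N) (i : I) :
    prodMap R M I ι S (j.lTensor M x) i = j (natMap R M N x (LinearMap.proj i ∘ₗ ι)) := by
  induction x using TensorProduct.induction_on with
  | zero => simp
  | tmul m n => simp
  | add x y hx hy => simp_all

lemma natMap_injective_of_prodMap_injective {I : Type*} (ι : M →ₗ[R] I → R) {S : Type*}
    [CommRing S] [Algebra R S] (hS : Function.Injective (prodMap R M I ι S))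
    {N : Type*} [AddCommGroup N] [Module R N] (j : N →ₗ[R] S) (g : S →ₗ[R] N)
    (hgj : g ∘ₗ j = LinearMap.id) :
    Function.Injective (natMap R M N) := by
  refine (injective_iff_map_eq_zero _).mpr fun x hx => ?_
  have hjx : j.lTensor M x = 0 :=
    hS <| (funext fun i => by simp [prodMap_lTensor, hx]).trans (map_zero _).symm
  calc x = (g ∘ₗ j).lTensor M x := by rw [hgj, LinearMap.lTensor_id, LinearMap.id_apply]
    _ = 0 := by rw [LinearMap.lTensor_comp_apply, hjx, map_zero]

lemma Module.exists_commAlgebra_retraction (N : Type v) [AddCommGroup N] [Module R N] :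
    ∃ (S : Type v) (_ : CommRing S) (_ : Algebra R S) (j : N →ₗ[R] S) (g : S →ₗ[R] N),
      g ∘ₗ j = LinearMap.id := by
  let A := R ⧸ Module.annihilator R N
  let : Module A N := Module.quotientAnnihilator
  let : Module Aᵐᵒᵖ N := Module.compHom _ ((RingHom.id A).fromOpposite mul_comm)
  have : IsCentralScalar A N := ⟨fun _ _ => rfl⟩
  have : IsScalarTower R A N := (Module.isTorsionBySet_annihilator R N).isScalarTower
  let S := TrivSqZeroExt A N
  have : Small.{v} S := inferInstanceAs (Small.{v} (A × N))
  let e : S ≃ₐ[R] Shrink.{v} S := (Shrink.algEquiv R S).symm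
  refine ⟨Shrink.{v} S, inferInstance, inferInstance,
    e.toLinearMap ∘ₗ (TrivSqZeroExt.inrHom A N).restrictScalars R,
    (TrivSqZeroExt.sndHom A N).restrictScalars R ∘ₗ e.symm.toLinearMap, ?_⟩
  ext n
  simp

theorem stmt6 (R : Type u) [CommRing R] (M : Type v) [AddCommGroup M] [Module R M] :
    (∀ (N : Type v) [AddCommGroup N] [Module R N], Function.Injective (natMap R M N)) ↔
      ∃ (I : Type v) (iota : M →ₗ[R] (I → R)),
        ∀ (S : Type v) [CommRing S] [Algebra R S],
          Function.Injective (prodMap R M I iota S) := by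
  refine ⟨fun h => UniversallyTorsionless.exists_prodMap_injective h, ?_⟩
  rintro ⟨I, ι, hι⟩ N _ _
  obtain ⟨S, _, _, j, g, hgj⟩ := Module.exists_commAlgebra_retraction (R := R) N
  exact natMap_injective_of_prodMap_injective ι (hι S) j g hgj
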